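/- arXiv:1612.00484 — 6 statements merged into one kernel-verified Lean document; each statement's English description precedes it below -/
import Mathlib

section
/- Time determinism for processes: if a process P of CCPS has transitions P --tick--> Q and P --tick--> R in the process LTS, then Q ≡ R, where ≡ is the standard structural congruence on timed processes (the least congruence on processes containing commutativity and associativity of ‖ with nil as neutral element). -/
namespace CCPS

/-! ## Names and values -/

abbrev Chan := ℕ
abbrev SensName := ℕ
abbrev ActName := ℕ
abbrev Val := ℝ

/-! ## Processes (value binders as functions, process variables in de Bruijn style) -/

inductive Proc : Type where
  | nil   : Proc
  | pvar  : ℕ → Proc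
  | tick  : Proc → Proc
  | par   : Proc → Proc → Proc
  | out   : Chan → Val → Proc → Proc → Proc      -- ⌊c̄⟨v⟩.P⌋Q
  | inp   : Chan → (Val → Proc) → Proc → Proc    -- ⌊c(x).P⌋Q
  | read  : SensName → (Val → Proc) → Proc → Proc -- ⌊s?(x).P⌋Q
  | write : ActName → Val → Proc → Proc → Proc   -- ⌊a!⟨v⟩.P⌋Q
  | res   : Proc → Chan → Proc                   -- P∖c
  | fix   : Proc → Proc                          -- fix X.P  (binds de Bruijn index 0)

/-- Lift (shift) all process variables ≥ cutoff `c` by one. -/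
def Proc.lift (c : ℕ) : Proc → Proc
  | .nil => .nil
  | .pvar m => if m < c then .pvar m else .pvar (m+1)
  | .tick P => .tick (Proc.lift c P)
  | .par P Q => .par (Proc.lift c P) (Proc.lift c Q)
  | .out ch v P Q => .out ch v (Proc.lift c P) (Proc.lift c Q)
  | .inp ch f Q => .inp ch (fun v => Proc.lift c (f v)) (Proc.lift c Q)
  | .read s f Q => .read s (fun v => Proc.lift c (f v)) (Proc.lift c Q)
  | .write a v P Q => .write a v (Proc.lift c P) (Proc.lift c Q)
  | .res P ch => .res (Proc.lift c P) ch
  | .fix P => .fix (Proc.lift (c+1) P)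

/-- Substitute process variable `n` by `R`. -/
def Proc.subst : Proc → ℕ → Proc → Proc
  | .nil, _, _ => .nil
  | .pvar m, n, R => if m = n then R else if n < m then .pvar (m-1) else .pvar m
  | .tick P, n, R => .tick (Proc.subst P n R)
  | .par P Q, n, R => .par (Proc.subst P n R) (Proc.subst Q n R)
  | .out ch v P Q, n, R => .out ch v (Proc.subst P n R) (Proc.subst Q n R)
  | .inp ch f Q, n, R => .inp ch (fun v => Proc.subst (f v) n R) (Proc.subst Q n R)
  | .read s f Q, n, R => .read s (fun v => Proc.subst (f v) n R) (Proc.subst Q n R)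
  | .write a v P Q, n, R => .write a v (Proc.subst P n R) (Proc.subst Q n R)
  | .res P ch, n, R => .res (Proc.subst P n R) ch
  | .fix P, n, R => .fix (Proc.subst P (n+1) (Proc.lift 0 R))

/-- Unfolding of recursion: P[fix X.P / X]. -/
def Proc.unfold (P : Proc) : Proc := Proc.subst P 0 (.fix P)

/-! ## Labels -/

inductive Label : Type where
  | tick  : Label
  | tau   : Label
  | out   : Chan → Val → Label     -- c̄v
  | inp   : Chan → Val → Label     -- cv
  | write : ActName → Val → Label  -- a!v
  | read  : SensName → Val → Label -- s?v

/-! ## Labelled transition system for processes.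

Untimed transitions `UStep` (labels different from tick) are defined first;
then timed transitions `TStep` (which use the absence of τ-transitions
negatively) are defined on top of them, and `Step` combines the two. -/

inductive UStep : Proc → Label → Proc → Prop where
  | outp  : UStep (.out c v P Q) (.out c v) P
  | inpp  : UStep (.inp c f Q) (.inp c v) (f v)
  | write : UStep (.write a v P Q) (.write a v) P
  | read  : UStep (.read s f Q) (.read s v) (f v)
  | comL  : UStep P (.out c v) P' → UStep Q (.inp c v) Q' →
            UStep (.par P Q) .tau (.par P' Q')
  | comR  : UStep P (.inp c v) P' → UStep Q (.out c v) Q' →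
            UStep (.par P Q) .tau (.par P' Q')
  | parL  : UStep P l P' → l ≠ .tick → UStep (.par P Q) l (.par P' Q)
  | parR  : UStep Q l Q' → l ≠ .tick → UStep (.par P Q) l (.par P Q')
  | res   : UStep P l P' → (∀ v, l ≠ .inp c v ∧ l ≠ .out c v) →
            UStep (.res P c) l (.res P' c)
  | unfold : UStep (Proc.unfold P) l Q → UStep (.fix P) l Q

inductive TStep : Proc → Proc → Prop where
  | nil          : TStep .nil .nil
  | delay        : TStep (.tick P) P
  | timeoutOut   : TStep (.out c v P Q) Q
  | timeoutInp   : TStep (.inp c f Q) Q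
  | timeoutRead  : TStep (.read s f Q) Q
  | timeoutWrite : TStep (.write a v P Q) Q
  | timePar      : TStep P P' → TStep Q Q' → (∀ R, ¬ UStep (.par P Q) .tau R) →
                   TStep (.par P Q) (.par P' Q')
  | res          : TStep P P' → TStep (.res P c) (.res P' c)
  | unfold       : TStep (Proc.unfold P) Q → TStep (.fix P) Q

/-- The process LTS. -/
def Step (P : Proc) (l : Label) (Q : Proc) : Prop :=
  match l with
  | .tick => TStep P Q
  | _ => UStep P l Q

/-! ## Structural congruence: the least congruence containing commutativity and
associativity of parallel composition, with nil as neutral element. -/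

inductive SC : Proc → Proc → Prop where
  | refl      : SC P P
  | symm      : SC P Q → SC Q P
  | trans     : SC P Q → SC Q R → SC P R
  | parComm   : SC (.par P Q) (.par Q P)
  | parAssoc  : SC (.par (.par P Q) R) (.par P (.par Q R))
  | parNil    : SC (.par P .nil) P
  | tickCong  : SC P P' → SC (.tick P) (.tick P')
  | parCong   : SC P P' → SC Q Q' → SC (.par P Q) (.par P' Q')
  | outCong   : SC P P' → SC Q Q' → SC (.out c v P Q) (.out c v P' Q')
  | inpCong   : (∀ v, SC (f v) (g v)) → SC Q Q' → SC (.inp c f Q) (.inp c g Q')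
  | readCong  : (∀ v, SC (f v) (g v)) → SC Q Q' → SC (.read s f Q) (.read s g Q')
  | writeCong : SC P P' → SC Q Q' → SC (.write a v P Q) (.write a v P' Q')
  | resCong   : SC P P' → SC (.res P c) (.res P' c)
  | fixCong   : SC P P' → SC (.fix P) (.fix P')

/-! ## Static predicates on processes -/

/-- All free process variables are < d. -/
inductive ClosedAbove : ℕ → Proc → Prop where
  | nil   : ClosedAbove d .nil
  | pvar  : m < d → ClosedAbove d (.pvar m)
  | tick  : ClosedAbove d P → ClosedAbove d (.tick P)
  | par   : ClosedAbove d P → ClosedAbove d Q → ClosedAbove d (.par P Q)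
  | out   : ClosedAbove d P → ClosedAbove d Q → ClosedAbove d (.out c v P Q)
  | inp   : (∀ v, ClosedAbove d (f v)) → ClosedAbove d Q → ClosedAbove d (.inp c f Q)
  | read  : (∀ v, ClosedAbove d (f v)) → ClosedAbove d Q → ClosedAbove d (.read s f Q)
  | write : ClosedAbove d P → ClosedAbove d Q → ClosedAbove d (.write a v P Q)
  | res   : ClosedAbove d P → ClosedAbove d (.res P c)
  | fix   : ClosedAbove (d+1) P → ClosedAbove d (.fix P)

/-- A closed process: no free process variables. -/
def Proc.Closed (P : Proc) : Prop := ClosedAbove 0 P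

/-- `TG n P`: process variable `n` occurs only time-guarded in `P`
(occurrences under `tick.-` or in the timeout continuation `Q` of `⌊π.P⌋Q`
are time-guarded). -/
inductive TG : ℕ → Proc → Prop where
  | nil   : TG n .nil
  | pvar  : m ≠ n → TG n (.pvar m)
  | tick  : TG n (.tick P)
  | par   : TG n P → TG n Q → TG n (.par P Q)
  | out   : TG n P → TG n (.out c v P Q)
  | inp   : (∀ v, TG n (f v)) → TG n (.inp c f Q)
  | read  : (∀ v, TG n (f v)) → TG n (.read s f Q)
  | write : TG n P → TG n (.write a v P Q)
  | res   : TG n P → TG n (.res P c)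
  | fix   : TG (n+1) P → TG n (.fix P)

/-- Well-formed processes: in every recursion `fix X.P` all occurrences of `X`
in `P` are time-guarded. -/
inductive WF : Proc → Prop where
  | nil   : WF .nil
  | pvar  : WF (.pvar m)
  | tick  : WF P → WF (.tick P)
  | par   : WF P → WF Q → WF (.par P Q)
  | out   : WF P → WF Q → WF (.out c v P Q)
  | inp   : (∀ v, WF (f v)) → WF Q → WF (.inp c f Q)
  | read  : (∀ v, WF (f v)) → WF Q → WF (.read s f Q)
  | write : WF P → WF Q → WF (.write a v P Q)
  | res   : WF P → WF (.res P c)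
  | fix   : TG 0 P → WF P → WF (.fix P)

/-- Non-interfering process: it never reads sensors nor writes actuators. -/
inductive NonInterfering : Proc → Prop where
  | nil  : NonInterfering .nil
  | pvar : NonInterfering (.pvar m)
  | tick : NonInterfering P → NonInterfering (.tick P)
  | par  : NonInterfering P → NonInterfering Q → NonInterfering (.par P Q)
  | out  : NonInterfering P → NonInterfering Q → NonInterfering (.out c v P Q)
  | inp  : (∀ v, NonInterfering (f v)) → NonInterfering Q → NonInterfering (.inp c f Q)
  | res  : NonInterfering P → NonInterfering (.res P c)
  | fix  : NonInterfering P → NonInterfering (.fix P)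

/-- `DevOK A S P`: every actuator mentioned in `P` is in `A` and every sensor
mentioned in `P` is in `S`. -/
inductive DevOK (A S : Finset ℕ) : Proc → Prop where
  | nil   : DevOK A S .nil
  | pvar  : DevOK A S (.pvar m)
  | tick  : DevOK A S P → DevOK A S (.tick P)
  | par   : DevOK A S P → DevOK A S Q → DevOK A S (.par P Q)
  | out   : DevOK A S P → DevOK A S Q → DevOK A S (.out c v P Q)
  | inp   : (∀ v, DevOK A S (f v)) → DevOK A S Q → DevOK A S (.inp c f Q)
  | read  : s ∈ S → (∀ v, DevOK A S (f v)) → DevOK A S Q → DevOK A S (.read s f Q)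
  | write : a ∈ A → DevOK A S P → DevOK A S Q → DevOK A S (.write a v P Q)
  | res   : DevOK A S P → DevOK A S (.res P c)
  | fix   : DevOK A S P → DevOK A S (.fix P)

/-! ## Physical environments -/

structure Env where
  X : Finset ℕ                       -- state variables
  A : Finset ℕ                       -- actuators
  S : Finset ℕ                       -- sensors
  xi_x : {n // n ∈ X} → ℝ            -- state function
  xi_u : {n // n ∈ A} → ℝ            -- actuator function
  xi_w : {n // n ∈ X} → ℝ            -- uncertainty function
  evol : ({n // n ∈ X} → ℝ) → ({n // n ∈ A} → ℝ) → ({n // n ∈ X} → ℝ) →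
         Set ({n // n ∈ X} → ℝ)      -- evolution map
  xi_e : {n // n ∈ S} → ℝ            -- sensor-error function
  meas : ({n // n ∈ X} → ℝ) → ({n // n ∈ S} → ℝ) →
         Set ({n // n ∈ S} → ℝ)      -- measurement map
  inv  : ({n // n ∈ X} → ℝ) → Prop   -- invariant function

/-- Possible measurements of sensor `s` in `E`. -/
def readSensor (E : Env) (s : ℕ) : Set ℝ :=
  { r | ∃ h : s ∈ E.S, ∃ ξ ∈ E.meas E.xi_x E.xi_e, r = ξ ⟨s, h⟩ }

/-- Update the value of actuator `a` to `v`. -/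
def updateAct (E : Env) (a : ℕ) (v : ℝ) : Env :=
  { E with xi_u := fun b => if (b : ℕ) = a then v else E.xi_u b }

/-- The set of next admissible environments. -/
def nextEnv (E : Env) : Set Env :=
  { E' | ∃ ξ ∈ E.evol E.xi_x E.xi_u E.xi_w, E' = { E with xi_x := ξ } }

/-- The invariant of `E`, evaluated at the current state. -/
def invHolds (E : Env) : Prop := E.inv E.xi_x

/-! ## Disjoint union of environments -/

/-- Glue two functions defined on finite sets into one on the union
(well defined on disjoint sets). -/
def glue {X1 X2 : Finset ℕ} (f : {n // n ∈ X1} → ℝ) (g : {n // n ∈ X2} → ℝ) :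
    {n // n ∈ X1 ∪ X2} → ℝ :=
  fun x => if h : (x : ℕ) ∈ X1 then f ⟨x, h⟩
           else g ⟨x, (Finset.mem_union.mp x.2).resolve_left h⟩

/-- Restriction of a function on a union to the left component. -/
def restrL {X1 X2 : Finset ℕ} (f : {n // n ∈ X1 ∪ X2} → ℝ) : {n // n ∈ X1} → ℝ :=
  fun x => f ⟨x, Finset.mem_union_left _ x.2⟩

/-- Restriction of a function on a union to the right component. -/
def restrR {X1 X2 : Finset ℕ} (f : {n // n ∈ X1 ∪ X2} → ℝ) : {n // n ∈ X2} → ℝ :=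
  fun x => f ⟨x, Finset.mem_union_right _ x.2⟩

/-- Disjointness of the name sets of two environments. -/
def EnvDisj (E1 E2 : Env) : Prop :=
  Disjoint E1.X E2.X ∧ Disjoint E1.A E2.A ∧ Disjoint E1.S E2.S

/-- Disjoint union `E1 ⊎ E2` of two environments. -/
def Env.disjUnion (E1 E2 : Env) : Env where
  X := E1.X ∪ E2.X
  A := E1.A ∪ E2.A
  S := E1.S ∪ E2.S
  xi_x := glue E1.xi_x E2.xi_x
  xi_u := glue E1.xi_u E2.xi_u
  xi_w := glue E1.xi_w E2.xi_w
  evol := fun ξ ψ φ =>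
    { ξ' | ∃ ξ1 ∈ E1.evol (restrL ξ) (restrL ψ) (restrL φ),
           ∃ ξ2 ∈ E2.evol (restrR ξ) (restrR ψ) (restrR φ), ξ' = glue ξ1 ξ2 }
  xi_e := glue E1.xi_e E2.xi_e
  meas := fun ξ η =>
    { m | ∃ m1 ∈ E1.meas (restrL ξ) (restrL η),
          ∃ m2 ∈ E2.meas (restrR ξ) (restrR η), m = glue m1 m2 }
  inv := fun ξ => E1.inv (restrL ξ) ∧ E2.inv (restrR ξ)

/-! ## Cyber-physical systems -/

structure CPS where
  env  : Env
  proc : Proc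

/-- Well-formed CPS: closed, time-guarded process mentioning only devices of
its environment. -/
def CPS.WellFormed (M : CPS) : Prop :=
  M.proc.Closed ∧ WF M.proc ∧ DevOK M.env.A M.env.S M.proc

/-- Disjoint union of (non-interfering) CPSs. -/
def CPS.disjUnion (M O : CPS) : CPS :=
  ⟨M.env.disjUnion O.env, .par M.proc O.proc⟩

/-- Untimed CPS transitions (rules Out, Inp, SensRead, ActWrite, Tau). -/
inductive CStepU : CPS → Label → CPS → Prop where
  | out : UStep P (.out c v) P' → invHolds E →
          CStepU ⟨E, P⟩ (.out c v) ⟨E, P'⟩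
  | inp : UStep P (.inp c v) P' → invHolds E →
          CStepU ⟨E, P⟩ (.inp c v) ⟨E, P'⟩
  | sensRead : UStep P (.read s v) P' → invHolds E → v ∈ readSensor E s →
          CStepU ⟨E, P⟩ .tau ⟨E, P'⟩
  | actWrite : UStep P (.write a v) P' → invHolds E →
          CStepU ⟨E, P⟩ .tau ⟨updateAct E a v, P'⟩
  | tau : UStep P .tau P' → invHolds E →
          CStepU ⟨E, P⟩ .tau ⟨E, P'⟩

/-- The CPS LTS (rule Time for tick, `CStepU` otherwise). -/
def CStep (M : CPS) (α : Label) (N : CPS) : Prop :=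
  match α with
  | .tick => TStep M.proc N.proc ∧ (∀ N', ¬ CStepU M .tau N') ∧
             invHolds M.env ∧ N.env ∈ nextEnv M.env
  | _ => CStepU M α N

/-! ## Weak transitions and bisimulation -/

def TauStep (M N : CPS) : Prop := CStep M .tau N

/-- `M ⇒ N`. -/
def WeakTau : CPS → CPS → Prop := Relation.ReflTransGen TauStep

/-- `M ⇒α⇒ N`. -/
def WeakStep (M : CPS) (α : Label) (N : CPS) : Prop :=
  ∃ M₁ M₂, WeakTau M M₁ ∧ CStep M₁ α M₂ ∧ WeakTau M₂ N

/-- `M ⇒α̂⇒ N`. -/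
def WeakHat (M : CPS) (α : Label) (N : CPS) : Prop :=
  match α with
  | .tau => WeakTau M N
  | _ => WeakStep M α N

def IsBisimulation (R : CPS → CPS → Prop) : Prop :=
  (∀ {M N}, R M N → R N M) ∧
  (∀ {M N α M'}, R M N → CStep M α M' → ∃ N', WeakHat N α N' ∧ R M' N')

/-- Weak bisimilarity `M ≈ N`. -/
def Bisim (M N : CPS) : Prop := ∃ R, IsBisimulation R ∧ R M N

/-! ## Traces -/

/-- Reachability in the CPS LTS. -/
def Reach : CPS → CPS → Prop :=
  Relation.ReflTransGen (fun M N => ∃ α, CStep M α N)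

def UntimedStep (M N : CPS) : Prop := ∃ α, α ≠ Label.tick ∧ CStep M α N

def UntimedReach : CPS → CPS → Prop := Relation.ReflTransGen UntimedStep

/-- One time slot: some untimed activity followed by a tick. -/
def SlotStep (M N : CPS) : Prop := ∃ M', UntimedReach M M' ∧ CStep M' .tick N

/-! ## Derived process notation -/

/-- Persistent prefix `π.P := fix X.⌊π.P⌋X` (output). -/
def prefOut (c : Chan) (v : Val) (P : Proc) : Proc :=
  .fix (.out c v (Proc.lift 0 P) (.pvar 0))

/-- Persistent prefix (actuator write). -/
def prefWrite (a : ActName) (v : Val) (P : Proc) : Proc :=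
  .fix (.write a v (Proc.lift 0 P) (.pvar 0))

/-- Persistent prefix (sensor read). -/
def prefRead (s : SensName) (f : Val → Proc) : Proc :=
  .fix (.read s (fun v => Proc.lift 0 (f v)) (.pvar 0))

/-- `tick^k.P`. -/
def Proc.ticks : ℕ → Proc → Proc
  | 0, P => P
  | n+1, P => .tick (Proc.ticks n P)

/-! ## The engine case study -/

noncomputable section
open Classical

def engDelta : ℝ := 0.4   -- uncertainty δ
def engEps : ℝ := 0.1     -- sensor error ε

/-- Value written on the actuator `cool` to turn the cooling on
(the actuator is on iff its value is negative). -/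
def valOn : Val := -1
/-- Value written on the actuator `cool` to turn the cooling off. -/
def valOff : Val := 1

def IsOn (u : ℝ) : Prop := u < 0
def IsOff (u : ℝ) : Prop := 0 ≤ u

/-- `heat(ξu, cool)`: `-coolRate` if the cooling is active, `+1` otherwise. -/
def engHeat (coolRate : ℝ) (u : ℝ) : ℝ := if u < 0 then -coolRate else 1

def warningCh : Chan := 0
def alarmCh : Chan := 1
def failureCh : Chan := 2

/-- The physical environment of the engine, with cooling power `coolRate`,
state variable `x` (temperature), actuator `a` (cool) and sensor `s`. -/
def EngEnvN (coolRate : ℝ) (x a s : ℕ) : Env where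
  X := {x}
  A := {a}
  S := {s}
  xi_x := fun _ => 0
  xi_u := fun _ => valOff
  xi_w := fun _ => engDelta
  evol := fun ξ ψ _ =>
    { ξ' | ∃ γ ∈ Set.Icc (-engDelta) engDelta,
           ∀ y u, ξ' y = ξ y + engHeat coolRate (ψ u) + γ }
  xi_e := fun _ => engEps
  meas := fun ξ _ =>
    { m | ∀ t y, m t ∈ Set.Icc (ξ y - engEps) (ξ y + engEps) }
  inv := fun ξ => ∀ y, 0 ≤ ξ y ∧ ξ y ≤ 30

/-- The controller of the engine with identifier `ID`, actuator `a` and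
sensor `s`:
`Ctrl = fix X. s?(x). if x > 10 then Cooling else tick.X` with
`Cooling = a!⟨on⟩.fix Y.tick⁵.s?(x). if x > 10 then w̄arning⟨ID⟩.Y else a!⟨off⟩.tick.X`. -/
def CtrlN (ID : Val) (a s : ℕ) : Proc :=
  .fix (prefRead s (fun x =>
    if 10 < x then
      prefWrite a valOn (.fix (Proc.ticks 5 (prefRead s (fun y =>
        if 10 < y then prefOut warningCh ID (.pvar 0)
        else prefWrite a valOff (.tick (.pvar 1))))))
    else .tick (.pvar 0)))

/-- The engine with cooling power `coolRate`. -/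
def EngGen (coolRate : ℝ) : CPS := ⟨EngEnvN coolRate 0 0 0, CtrlN 0 0 0⟩

/-- The engine `Eng`. -/
def Eng : CPS := EngGen 1
/-- The variant engine `Enḡ` (heat = −0.8 when cooling). -/
def EngBar : CPS := EngGen 0.8
/-- The variant engine `Enĝ` (heat = −0.7 when cooling). -/
def EngHat : CPS := EngGen 0.7

/-- Current temperature of an engine-like CPS (state variable named 0). -/
def CPS.temp (M : CPS) : ℝ :=
  if h : (0 : ℕ) ∈ M.env.X then M.env.xi_x ⟨0, h⟩ else 0

/-- Current value of the `cool` actuator of an engine-like CPS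
(actuator named 0). -/
def CPS.cool (M : CPS) : ℝ :=
  if h : (0 : ℕ) ∈ M.env.A then M.env.xi_u ⟨0, h⟩ else 0

/-! ## The airplane case study -/

def idL : Val := 0
def idR : Val := 1

/-- `CheckAux id m` is `Check^id_(5-m)`; the free process variable 0 is the
recursion variable `X` of `Check`. -/
def CheckAux (id : Val) : ℕ → Proc
  | 0 => .inp warningCh (fun z =>
           if z ≠ id then prefOut alarmCh 0 (.tick (.pvar 0))
           else prefOut failureCh id (.tick (.pvar 0)))
         (prefOut failureCh id (.pvar 0))
  | m+1 => .inp warningCh (fun y =>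
           if y ≠ id then prefOut alarmCh 0 (.tick (.pvar 0))
           else .tick (CheckAux id m))
         (CheckAux id m)

/-- The monitoring process `Check`. -/
def Check : Proc :=
  .fix (.inp warningCh
    (fun x => if x = idL then CheckAux idL 4 else CheckAux idR 4)
    (.pvar 0))

/-- The left engine (identifier L, devices named 0). -/
def EngL (coolRate : ℝ) : CPS := ⟨EngEnvN coolRate 0 0 0, CtrlN idL 0 0⟩
/-- The right engine (identifier R, devices named 1). -/
def EngR (coolRate : ℝ) : CPS := ⟨EngEnvN coolRate 1 1 1, CtrlN idR 1 1⟩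

/-- `Airplane(r) = ((Eng_L ⊎ Eng_R) ‖ Check)∖warning` with cooling power r. -/
def AirplaneGen (coolRate : ℝ) : CPS :=
  ⟨(EngEnvN coolRate 0 0 0).disjUnion (EngEnvN coolRate 1 1 1),
   .res (.par (.par (CtrlN idL 0 0) (CtrlN idR 1 1)) Check) warningCh⟩

def Airplane : CPS := AirplaneGen 1
def AirplaneBar : CPS := AirplaneGen 0.8

end


/-- **Time determinism for processes**: if `P --tick--> Q` and `P --tick--> R`
then `Q ≡ R`. -/
theorem time_determinism_proc (P Q R : Proc)
    (h1 : Step P .tick Q) (h2 : Step P .tick R) : SC Q R := by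
  have h1' : TStep P Q := h1
  have h2' : TStep P R := h2
  clear h1 h2
  induction h1' generalizing R with
  | nil => cases h2'; exact SC.refl
  | delay => cases h2'; exact SC.refl
  | timeoutOut => cases h2'; exact SC.refl
  | timeoutInp => cases h2'; exact SC.refl
  | timeoutRead => cases h2'; exact SC.refl
  | timeoutWrite => cases h2'; exact SC.refl
  | timePar _ _ _ ihP ihQ =>
      cases h2' with
      | timePar hP hQ _ => exact SC.parCong (ihP _ hP) (ihQ _ hQ)
  | res _ ih =>
      cases h2' with
      | res h => exact SC.resCong (ih _ h)
  | unfold _ ih =>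
      cases h2' with
      | unfold h => exact ih _ h

end CCPS
end

section
/- Maximal progress for processes: if a process P of CCPS has a transition P --τ--> P' in the process LTS, then there is no P'' such that P --tick--> P''. -/
namespace CCPS

private lemma no_tau_of_tstep {P P'' : Proc} (ht : TStep P P'') :
    ∀ P', ¬ UStep P .tau P' := by
  induction ht with
  | nil => intro P' hu; cases hu
  | delay => intro P' hu; cases hu
  | timeoutOut => intro P' hu; cases hu
  | timeoutInp => intro P' hu; cases hu
  | timeoutRead => intro P' hu; cases hu
  | timeoutWrite => intro P' hu; cases hu
  | timePar _ _ hno => exact hno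
  | res _ ih =>
      intro P' hu
      cases hu with
      | res h _ => exact ih _ h
  | unfold _ ih =>
      intro P' hu
      cases hu with
      | unfold h => exact ih _ h

/-- **Maximal progress for processes**: if `P --τ--> P'` then there is no `P''`
such that `P --tick--> P''`. -/
theorem maximal_progress_proc (P P' : Proc) (h : Step P .tau P') :
    ¬ ∃ P'', Step P .tick P'' := by
  rintro ⟨P'', ht⟩
  exact no_tau_of_tstep ht P' h

end CCPS
end

section
/- Time determinism for CPSs (Theorem 1(a)): let M = E ⋈ P be a CPS of CCPS. If M --tick--> Ê ⋈ Q and M --tick--> Ẽ ⋈ R in the CPS LTS, then Ê and Ẽ both belong to next(E), and Q ≡ R, where ≡ is the standard structural congruence on timed processes (the least congruence on processes containing commutativity and associativity of ‖ with nil as neutral element). -/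
namespace CCPS

theorem tstep_det {P Q R : Proc} (h1 : TStep P Q) (h2 : TStep P R) : Q = R := by
  induction h1 generalizing R with
  | nil => cases h2; rfl
  | delay => cases h2; rfl
  | timeoutOut => cases h2; rfl
  | timeoutInp => cases h2; rfl
  | timeoutRead => cases h2; rfl
  | timeoutWrite => cases h2; rfl
  | timePar _ _ _ ih1 ih2 =>
      cases h2 with
      | timePar hp hq _ => rw [ih1 hp, ih2 hq]
  | res _ ih =>
      cases h2 with
      | res hp => rw [ih hp]
  | unfold _ ih =>
      cases h2 with
      | unfold hp => exact ih hp

/-- **Time determinism for CPSs** (Theorem 1(a)): if `E ⋈ P --tick--> Ê ⋈ Q`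
and `E ⋈ P --tick--> Ẽ ⋈ R` then `Ê, Ẽ ∈ next(E)` and `Q ≡ R`. -/
theorem time_determinism_cps (E Ehat Etil : Env) (P Q R : Proc)
    (hwf : CPS.WellFormed ⟨E, P⟩)
    (h1 : CStep ⟨E, P⟩ .tick ⟨Ehat, Q⟩)
    (h2 : CStep ⟨E, P⟩ .tick ⟨Etil, R⟩) :
    Ehat ∈ nextEnv E ∧ Etil ∈ nextEnv E ∧ SC Q R := by
  obtain ⟨t1, -, -, n1⟩ := h1
  obtain ⟨t2, -, -, n2⟩ := h2
  refine ⟨n1, n2, ?_⟩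
  have : Q = R := tstep_det t1 t2
  exact this ▸ SC.refl

end CCPS
end

section
/- Patience for CPSs (Theorem 1(c)): let M = E ⋈ P be a CPS of CCPS. If there is no M' such that M --tick--> M' in the CPS LTS, then either next(E) = ∅, or inv(E) = false, or there exists N such that M --τ--> N. -/
namespace CCPS

/-! ## Auxiliary material for patience -/

/-- Size of the unguarded skeleton of a process. -/
def gsize : Proc → ℕ
  | .nil => 1
  | .pvar _ => 1
  | .tick _ => 1
  | .par P Q => gsize P + gsize Q + 1
  | .out _ _ _ _ => 1
  | .inp _ _ _ => 1
  | .read _ _ _ => 1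
  | .write _ _ _ _ => 1
  | .res P _ => gsize P + 1
  | .fix P => gsize P + 1

lemma gsize_pos (P : Proc) : 1 ≤ gsize P := by
  cases P <;> simp [gsize]

lemma tg_lift_self (R : Proc) : ∀ c, TG c (Proc.lift c R) := by
  induction R with
  | nil => intro c; exact TG.nil
  | pvar m =>
    intro c; simp only [Proc.lift]
    split_ifs <;> (constructor <;> omega)
  | tick P ih => intro c; exact TG.tick
  | par P Q ihP ihQ => intro c; exact TG.par (ihP c) (ihQ c)
  | out c v P Q ihP ihQ => intro c'; exact TG.out (ihP c')
  | inp c f Q ihf ihQ => intro c'; exact TG.inp (fun v => ihf v c')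
  | read s f Q ihf ihQ => intro c'; exact TG.read (fun v => ihf v c')
  | write a v P Q ihP ihQ => intro c'; exact TG.write (ihP c')
  | res P ch ihP => intro c; exact TG.res (ihP c)
  | fix P ihP => intro c; exact TG.fix (ihP (c+1))

lemma tg_lift_lt {P : Proc} : ∀ {c j}, j < c → TG j P → TG j (Proc.lift c P) := by
  induction P with
  | nil => intro c j hj htg; exact TG.nil
  | pvar m =>
    intro c j hj htg
    cases htg with | pvar hm =>
    simp only [Proc.lift]
    split_ifs <;> (constructor <;> omega)
  | tick P ih => intro c j hj htg; exact TG.tick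
  | par P Q ihP ihQ =>
    intro c j hj htg
    cases htg with | par hP hQ => exact TG.par (ihP hj hP) (ihQ hj hQ)
  | out c v P Q ihP ihQ =>
    intro c' j hj htg
    cases htg with | out hP => exact TG.out (ihP hj hP)
  | inp c f Q ihf ihQ =>
    intro c' j hj htg
    cases htg with | inp hf => exact TG.inp (fun v => ihf v hj (hf v))
  | read s f Q ihf ihQ =>
    intro c' j hj htg
    cases htg with | read hf => exact TG.read (fun v => ihf v hj (hf v))
  | write a v P Q ihP ihQ =>
    intro c' j hj htg
    cases htg with | write hP => exact TG.write (ihP hj hP)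
  | res P ch ihP =>
    intro c j hj htg
    cases htg with | res hP => exact TG.res (ihP hj hP)
  | fix P ihP =>
    intro c j hj htg
    cases htg with | fix hP => exact TG.fix (ihP (Nat.succ_lt_succ hj) hP)

lemma tg_lift_ge {P : Proc} : ∀ {c j}, c ≤ j → TG j P → TG (j+1) (Proc.lift c P) := by
  induction P with
  | nil => intro c j hj htg; exact TG.nil
  | pvar m =>
    intro c j hj htg
    cases htg with | pvar hm =>
    simp only [Proc.lift]
    split_ifs <;> (constructor <;> omega)
  | tick P ih => intro c j hj htg; exact TG.tick
  | par P Q ihP ihQ =>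
    intro c j hj htg
    cases htg with | par hP hQ => exact TG.par (ihP hj hP) (ihQ hj hQ)
  | out c v P Q ihP ihQ =>
    intro c' j hj htg
    cases htg with | out hP => exact TG.out (ihP hj hP)
  | inp c f Q ihf ihQ =>
    intro c' j hj htg
    cases htg with | inp hf => exact TG.inp (fun v => ihf v hj (hf v))
  | read s f Q ihf ihQ =>
    intro c' j hj htg
    cases htg with | read hf => exact TG.read (fun v => ihf v hj (hf v))
  | write a v P Q ihP ihQ =>
    intro c' j hj htg
    cases htg with | write hP => exact TG.write (ihP hj hP)
  | res P ch ihP =>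
    intro c j hj htg
    cases htg with | res hP => exact TG.res (ihP hj hP)
  | fix P ihP =>
    intro c j hj htg
    cases htg with | fix hP => exact TG.fix (ihP (Nat.succ_le_succ hj) hP)

lemma closed_lift {P : Proc} : ∀ {c d}, ClosedAbove d P → ClosedAbove (d+1) (Proc.lift c P) := by
  induction P with
  | nil => intro c d hc; exact ClosedAbove.nil
  | pvar m =>
    intro c d hc
    cases hc with | pvar hm =>
    simp only [Proc.lift]
    split_ifs <;> (constructor <;> omega)
  | tick P ih =>
    intro c d hc
    cases hc with | tick h => exact ClosedAbove.tick (ih h)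
  | par P Q ihP ihQ =>
    intro c d hc
    cases hc with | par hP hQ => exact ClosedAbove.par (ihP hP) (ihQ hQ)
  | out c v P Q ihP ihQ =>
    intro c' d hc
    cases hc with | out hP hQ => exact ClosedAbove.out (ihP hP) (ihQ hQ)
  | inp c f Q ihf ihQ =>
    intro c' d hc
    cases hc with | inp hf hQ =>
      exact ClosedAbove.inp (fun v => ihf v (hf v)) (ihQ hQ)
  | read s f Q ihf ihQ =>
    intro c' d hc
    cases hc with | read hf hQ =>
      exact ClosedAbove.read (fun v => ihf v (hf v)) (ihQ hQ)
  | write a v P Q ihP ihQ =>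
    intro c' d hc
    cases hc with | write hP hQ => exact ClosedAbove.write (ihP hP) (ihQ hQ)
  | res P ch ihP =>
    intro c d hc
    cases hc with | res hP => exact ClosedAbove.res (ihP hP)
  | fix P ihP =>
    intro c d hc
    cases hc with | fix hP => exact ClosedAbove.fix (ihP hP)

lemma wf_lift {P : Proc} : ∀ {c}, WF P → WF (Proc.lift c P) := by
  induction P with
  | nil => intro c hw; exact WF.nil
  | pvar m =>
    intro c hw
    simp only [Proc.lift]
    split_ifs <;> exact WF.pvar
  | tick P ih =>
    intro c hw
    cases hw with | tick h => exact WF.tick (ih h)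
  | par P Q ihP ihQ =>
    intro c hw
    cases hw with | par hP hQ => exact WF.par (ihP hP) (ihQ hQ)
  | out c v P Q ihP ihQ =>
    intro c' hw
    cases hw with | out hP hQ => exact WF.out (ihP hP) (ihQ hQ)
  | inp c f Q ihf ihQ =>
    intro c' hw
    cases hw with | inp hf hQ => exact WF.inp (fun v => ihf v (hf v)) (ihQ hQ)
  | read s f Q ihf ihQ =>
    intro c' hw
    cases hw with | read hf hQ => exact WF.read (fun v => ihf v (hf v)) (ihQ hQ)
  | write a v P Q ihP ihQ =>
    intro c' hw
    cases hw with | write hP hQ => exact WF.write (ihP hP) (ihQ hQ)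
  | res P ch ihP =>
    intro c hw
    cases hw with | res hP => exact WF.res (ihP hP)
  | fix P ihP =>
    intro c hw
    cases hw with | fix htg0 hP =>
      exact WF.fix (tg_lift_lt (Nat.succ_pos c) htg0) (ihP hP)

lemma tg_subst_lt {P : Proc} : ∀ {n j R}, j < n → TG j P → TG j R →
    TG j (Proc.subst P n R) := by
  induction P with
  | nil => intro n j R hj htg htgR; exact TG.nil
  | pvar m =>
    intro n j R hj htg htgR
    cases htg with | pvar hm =>
    simp only [Proc.subst]
    split_ifs <;> first | assumption | (constructor <;> omega)
  | tick P ih => intro n j R hj htg htgR; exact TG.tick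
  | par P Q ihP ihQ =>
    intro n j R hj htg htgR
    cases htg with | par hP hQ => exact TG.par (ihP hj hP htgR) (ihQ hj hQ htgR)
  | out c v P Q ihP ihQ =>
    intro n j R hj htg htgR
    cases htg with | out hP => exact TG.out (ihP hj hP htgR)
  | inp c f Q ihf ihQ =>
    intro n j R hj htg htgR
    cases htg with | inp hf => exact TG.inp (fun v => ihf v hj (hf v) htgR)
  | read s f Q ihf ihQ =>
    intro n j R hj htg htgR
    cases htg with | read hf => exact TG.read (fun v => ihf v hj (hf v) htgR)
  | write a v P Q ihP ihQ =>
    intro n j R hj htg htgR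
    cases htg with | write hP => exact TG.write (ihP hj hP htgR)
  | res P ch ihP =>
    intro n j R hj htg htgR
    cases htg with | res hP => exact TG.res (ihP hj hP htgR)
  | fix P ihP =>
    intro n j R hj htg htgR
    cases htg with | fix hP =>
    exact TG.fix (ihP (Nat.succ_lt_succ hj) hP (tg_lift_ge (Nat.zero_le j) htgR))

lemma tg_subst_ge {P : Proc} : ∀ {n j R}, n ≤ j → TG (j+1) P → TG j R →
    TG j (Proc.subst P n R) := by
  induction P with
  | nil => intro n j R hj htg htgR; exact TG.nil
  | pvar m =>
    intro n j R hj htg htgR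
    cases htg with | pvar hm =>
    simp only [Proc.subst]
    split_ifs <;> first | assumption | (constructor <;> omega)
  | tick P ih => intro n j R hj htg htgR; exact TG.tick
  | par P Q ihP ihQ =>
    intro n j R hj htg htgR
    cases htg with | par hP hQ => exact TG.par (ihP hj hP htgR) (ihQ hj hQ htgR)
  | out c v P Q ihP ihQ =>
    intro n j R hj htg htgR
    cases htg with | out hP => exact TG.out (ihP hj hP htgR)
  | inp c f Q ihf ihQ =>
    intro n j R hj htg htgR
    cases htg with | inp hf => exact TG.inp (fun v => ihf v hj (hf v) htgR)
  | read s f Q ihf ihQ =>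
    intro n j R hj htg htgR
    cases htg with | read hf => exact TG.read (fun v => ihf v hj (hf v) htgR)
  | write a v P Q ihP ihQ =>
    intro n j R hj htg htgR
    cases htg with | write hP => exact TG.write (ihP hj hP htgR)
  | res P ch ihP =>
    intro n j R hj htg htgR
    cases htg with | res hP => exact TG.res (ihP hj hP htgR)
  | fix P ihP =>
    intro n j R hj htg htgR
    cases htg with | fix hP =>
    exact TG.fix (ihP (Nat.succ_le_succ hj) hP (tg_lift_ge (Nat.zero_le j) htgR))

lemma closed_subst {P : Proc} : ∀ {n d R}, ClosedAbove (d+1) P → ClosedAbove d R →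
    n ≤ d → ClosedAbove d (Proc.subst P n R) := by
  induction P with
  | nil => intro n d R hc hcR hn; exact ClosedAbove.nil
  | pvar m =>
    intro n d R hc hcR hn
    cases hc with | pvar hm =>
    simp only [Proc.subst]
    split_ifs <;> first | assumption | (constructor <;> omega)
  | tick P ih =>
    intro n d R hc hcR hn
    cases hc with | tick h => exact ClosedAbove.tick (ih h hcR hn)
  | par P Q ihP ihQ =>
    intro n d R hc hcR hn
    cases hc with | par hP hQ =>
      exact ClosedAbove.par (ihP hP hcR hn) (ihQ hQ hcR hn)
  | out c v P Q ihP ihQ =>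
    intro n d R hc hcR hn
    cases hc with | out hP hQ =>
      exact ClosedAbove.out (ihP hP hcR hn) (ihQ hQ hcR hn)
  | inp c f Q ihf ihQ =>
    intro n d R hc hcR hn
    cases hc with | inp hf hQ =>
      exact ClosedAbove.inp (fun v => ihf v (hf v) hcR hn) (ihQ hQ hcR hn)
  | read s f Q ihf ihQ =>
    intro n d R hc hcR hn
    cases hc with | read hf hQ =>
      exact ClosedAbove.read (fun v => ihf v (hf v) hcR hn) (ihQ hQ hcR hn)
  | write a v P Q ihP ihQ =>
    intro n d R hc hcR hn
    cases hc with | write hP hQ =>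
      exact ClosedAbove.write (ihP hP hcR hn) (ihQ hQ hcR hn)
  | res P ch ihP =>
    intro n d R hc hcR hn
    cases hc with | res hP => exact ClosedAbove.res (ihP hP hcR hn)
  | fix P ihP =>
    intro n d R hc hcR hn
    cases hc with | fix hP =>
      exact ClosedAbove.fix (ihP hP (closed_lift hcR) (Nat.succ_le_succ hn))

lemma wf_subst {P : Proc} : ∀ {n R}, WF P → WF R → WF (Proc.subst P n R) := by
  induction P with
  | nil => intro n R hw hwR; exact WF.nil
  | pvar m =>
    intro n R hw hwR
    simp only [Proc.subst]
    split_ifs <;> first | assumption | exact WF.pvar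
  | tick P ih =>
    intro n R hw hwR
    cases hw with | tick h => exact WF.tick (ih h hwR)
  | par P Q ihP ihQ =>
    intro n R hw hwR
    cases hw with | par hP hQ => exact WF.par (ihP hP hwR) (ihQ hQ hwR)
  | out c v P Q ihP ihQ =>
    intro n R hw hwR
    cases hw with | out hP hQ => exact WF.out (ihP hP hwR) (ihQ hQ hwR)
  | inp c f Q ihf ihQ =>
    intro n R hw hwR
    cases hw with | inp hf hQ =>
      exact WF.inp (fun v => ihf v (hf v) hwR) (ihQ hQ hwR)
  | read s f Q ihf ihQ =>
    intro n R hw hwR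
    cases hw with | read hf hQ =>
      exact WF.read (fun v => ihf v (hf v) hwR) (ihQ hQ hwR)
  | write a v P Q ihP ihQ =>
    intro n R hw hwR
    cases hw with | write hP hQ => exact WF.write (ihP hP hwR) (ihQ hQ hwR)
  | res P ch ihP =>
    intro n R hw hwR
    cases hw with | res hP => exact WF.res (ihP hP hwR)
  | fix P ihP =>
    intro n R hw hwR
    cases hw with | fix htg0 hP =>
      exact WF.fix (tg_subst_lt (Nat.succ_pos n) htg0 (tg_lift_self R 0))
        (ihP hP (wf_lift hwR))

lemma gsize_subst {P : Proc} : ∀ {n R}, TG n P →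
    gsize (Proc.subst P n R) = gsize P := by
  induction P with
  | nil => intro n R htg; rfl
  | pvar m =>
    intro n R htg
    cases htg with | pvar hm =>
    simp only [Proc.subst]
    rw [if_neg hm]
    split <;> rfl
  | tick P ih => intro n R htg; rfl
  | par P Q ihP ihQ =>
    intro n R htg
    cases htg with | par hP hQ =>
    simp only [Proc.subst, gsize]
    rw [ihP hP, ihQ hQ]
  | out c v P Q ihP ihQ => intro n R htg; rfl
  | inp c f Q ihf ihQ => intro n R htg; rfl
  | read s f Q ihf ihQ => intro n R htg; rfl
  | write a v P Q ihP ihQ => intro n R htg; rfl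
  | res P ch ihP =>
    intro n R htg
    cases htg with | res hP =>
    simp only [Proc.subst, gsize]
    rw [ihP hP]
  | fix P ihP =>
    intro n R htg
    cases htg with | fix hP =>
    simp only [Proc.subst, gsize]
    rw [ihP hP]

/-- Patient processes: the unguarded skeleton has no stuck process variable. -/
inductive Pat : Proc → Prop where
  | nil : Pat .nil
  | tick : Pat (.tick P)
  | out : Pat (.out c v P Q)
  | inp : Pat (.inp c f Q)
  | read : Pat (.read s f Q)
  | write : Pat (.write a v P Q)
  | par : Pat P → Pat Q → Pat (.par P Q)
  | res : Pat P → Pat (.res P c)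
  | fix : Pat (Proc.unfold P) → Pat (.fix P)

lemma main_pat : ∀ (k : ℕ) (P : Proc) (d : ℕ), gsize P ≤ k → ClosedAbove d P → WF P →
    (∀ m, m < d → TG m P) → Pat P := by
  intro k
  induction k with
  | zero => intro P d hg _ _ _; exact absurd (le_trans (gsize_pos P) hg) (by omega)
  | succ k ih =>
    intro P d hg hc hw htg
    cases P with
    | nil => exact Pat.nil
    | pvar m =>
      cases hc with
      | pvar hm => cases htg m hm with | pvar h => exact absurd rfl h
    | tick P => exact Pat.tick
    | out c v P Q => exact Pat.out
    | inp c f Q => exact Pat.inp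
    | read s f Q => exact Pat.read
    | write a v P Q => exact Pat.write
    | par P Q =>
      cases hc with | par hcP hcQ =>
      cases hw with | par hwP hwQ =>
      simp only [gsize] at hg
      exact Pat.par
        (ih P d (by omega) hcP hwP (fun m hm => by cases htg m hm with | par h _ => exact h))
        (ih Q d (by omega) hcQ hwQ (fun m hm => by cases htg m hm with | par _ h => exact h))
    | res P c =>
      cases hc with | res hcP =>
      cases hw with | res hwP =>
      simp only [gsize] at hg
      exact Pat.res
        (ih P d (by omega) hcP hwP (fun m hm => by cases htg m hm with | res h => exact h))
    | fix P =>
      cases hc with | fix hcP =>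
      cases hw with | fix htg0 hwP =>
      simp only [gsize] at hg
      refine Pat.fix (ih (Proc.unfold P) d ?_ ?_ ?_ ?_)
      · rw [Proc.unfold, gsize_subst htg0]; omega
      · exact closed_subst hcP (ClosedAbove.fix hcP) (Nat.zero_le d)
      · exact wf_subst hwP (WF.fix htg0 hwP)
      · intro m hm
        have hfix : TG m (Proc.fix P) := htg m hm
        cases hfix with
        | fix h => exact tg_subst_ge (Nat.zero_le m) h (htg m hm)

lemma pat_tstep {P : Proc} (hp : Pat P) (hno : ∀ R, ¬ UStep P .tau R) :
    ∃ P', TStep P P' := by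
  induction hp with
  | nil => exact ⟨_, TStep.nil⟩
  | tick => exact ⟨_, TStep.delay⟩
  | out => exact ⟨_, TStep.timeoutOut⟩
  | inp => exact ⟨_, TStep.timeoutInp⟩
  | read => exact ⟨_, TStep.timeoutRead⟩
  | write => exact ⟨_, TStep.timeoutWrite⟩
  | par hP hQ ihP ihQ =>
    obtain ⟨P', hP'⟩ := ihP (fun R hR =>
      hno _ (UStep.parL hR (by intro h; cases h)))
    obtain ⟨Q', hQ'⟩ := ihQ (fun R hR =>
      hno _ (UStep.parR hR (by intro h; cases h)))
    exact ⟨_, TStep.timePar hP' hQ' hno⟩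
  | res hP ihP =>
    obtain ⟨P', hP'⟩ := ihP (fun R hR =>
      hno _ (UStep.res hR (fun v => ⟨(by intro h; cases h), (by intro h; cases h)⟩)))
    exact ⟨_, TStep.res hP'⟩
  | fix hP ihP =>
    obtain ⟨P', hP'⟩ := ihP (fun R hR => hno _ (UStep.unfold hR))
    exact ⟨_, TStep.unfold hP'⟩


/-- **Patience for CPSs** (Theorem 1(c)): if `M = E ⋈ P` has no tick
transition then either `next(E) = ∅`, or the invariant of `E` is false, or
`M` has a τ-transition. -/
theorem patience_cps (E : Env) (P : Proc) (hwf : CPS.WellFormed ⟨E, P⟩)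
    (h : ∀ M', ¬ CStep ⟨E, P⟩ .tick M') :
    nextEnv E = ∅ ∨ ¬ invHolds E ∨ ∃ N, CStep ⟨E, P⟩ .tau N := by
  by_cases h1 : nextEnv E = ∅
  · exact Or.inl h1
  by_cases h2 : invHolds E
  · refine Or.inr (Or.inr ?_)
    by_contra h3
    have hnotau : ∀ R, ¬ UStep P .tau R := fun R hR =>
      h3 ⟨⟨E, R⟩, CStepU.tau hR h2⟩
    have hPat : Pat P :=
      main_pat (gsize P) P 0 le_rfl hwf.1 hwf.2.1 (fun m hm => absurd hm (Nat.not_lt_zero m))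
    obtain ⟨P', hT⟩ := pat_tstep hPat hnotau
    obtain ⟨E', hE'⟩ := Set.nonempty_iff_ne_empty.mpr h1
    exact h ⟨E', P'⟩
      (And.intro hT (And.intro (fun N' hN' => h3 ⟨N', hN'⟩) (And.intro h2 hE')))
  · exact Or.inr (Or.inl h2)

end CCPS
end

section
/- Congruence of bisimilarity with respect to channel restriction (Theorem 2(3)): if M ≈ N are weakly bisimilar CPSs of CCPS, then M∖c ≈ N∖c for any channel c, where (E ⋈ P)∖c denotes E ⋈ (P∖c). -/
namespace CCPS

section ResLemmas

lemma ustep_res_inv {P R : Proc} {c : Chan} {l : Label}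
    (h : UStep (.res P c) l R) :
    ∃ P', R = .res P' c ∧ UStep P l P' ∧ (∀ v, l ≠ .inp c v ∧ l ≠ .out c v) := by
  cases h with
  | res h hc => exact ⟨_, rfl, h, hc⟩

lemma tstep_res_inv {P : Proc} {c : Chan} {R : Proc}
    (h : TStep (.res P c) R) : ∃ P', R = .res P' c ∧ TStep P P' := by
  cases h with
  | res h => exact ⟨_, rfl, h⟩

lemma cstepu_tau_res {M N : CPS} (c : Chan) (h : CStepU M .tau N) :
    CStepU ⟨M.env, .res M.proc c⟩ .tau ⟨N.env, .res N.proc c⟩ := by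
  cases h with
  | sensRead h hinv hv =>
      exact CStepU.sensRead (UStep.res h (by intro v; simp)) hinv hv
  | actWrite h hinv =>
      exact CStepU.actWrite (UStep.res h (by intro v; simp)) hinv
  | tau h hinv =>
      exact CStepU.tau (UStep.res h (by intro v; simp)) hinv

lemma cstepu_res_inv {E : Env} {P : Proc} {c : Chan} {α : Label} {N : CPS}
    (h : CStepU ⟨E, .res P c⟩ α N) :
    ∃ P', N.proc = .res P' c ∧ CStepU ⟨E, P⟩ α ⟨N.env, P'⟩ ∧
      (∀ v, α ≠ .inp c v ∧ α ≠ .out c v) := by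
  cases h with
  | out h hinv =>
      obtain ⟨P', rfl, h', hc⟩ := ustep_res_inv h
      exact ⟨P', rfl, CStepU.out h' hinv, hc⟩
  | inp h hinv =>
      obtain ⟨P', rfl, h', hc⟩ := ustep_res_inv h
      exact ⟨P', rfl, CStepU.inp h' hinv, hc⟩
  | sensRead h hinv hv =>
      obtain ⟨P', rfl, h', _⟩ := ustep_res_inv h
      exact ⟨P', rfl, CStepU.sensRead h' hinv hv, by intro v; simp⟩
  | actWrite h hinv =>
      obtain ⟨P', rfl, h', _⟩ := ustep_res_inv h
      exact ⟨P', rfl, CStepU.actWrite h' hinv, by intro v; simp⟩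
  | tau h hinv =>
      obtain ⟨P', rfl, h', _⟩ := ustep_res_inv h
      exact ⟨P', rfl, CStepU.tau h' hinv, by intro v; simp⟩

lemma notau_res_iff {E : Env} {P : Proc} {c : Chan} :
    (∀ N, ¬ CStepU ⟨E, .res P c⟩ .tau N) ↔ (∀ N, ¬ CStepU ⟨E, P⟩ .tau N) := by
  constructor
  · intro h N hN
    exact h ⟨N.env, .res N.proc c⟩ (cstepu_tau_res (M := ⟨E, P⟩) c hN)
  · intro h N hN
    obtain ⟨P', _, h', _⟩ := cstepu_res_inv hN
    exact h _ h'

lemma cstep_res {M N : CPS} {c : Chan} {α : Label}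
    (h : CStep M α N) (hc : ∀ v, α ≠ .inp c v ∧ α ≠ .out c v) :
    CStep ⟨M.env, .res M.proc c⟩ α ⟨N.env, .res N.proc c⟩ := by
  match α with
  | .tau => exact cstepu_tau_res c h
  | .tick =>
      obtain ⟨ht, hnt, hinv, hnext⟩ := h
      refine ⟨TStep.res ht, ?_, hinv, hnext⟩
      intro N' hN'
      obtain ⟨P', _, h', _⟩ := cstepu_res_inv hN'
      exact hnt _ h'
  | .out c' v =>
      cases h with
      | out h hinv =>
          refine CStepU.out (UStep.res h ?_) hinv
          intro v'
          refine ⟨by simp, ?_⟩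
          intro heq
          cases heq
          exact (hc v).2 rfl
  | .inp c' v =>
      cases h with
      | inp h hinv =>
          refine CStepU.inp (UStep.res h ?_) hinv
          intro v'
          refine ⟨?_, by simp⟩
          intro heq
          cases heq
          exact (hc v).1 rfl
  | .read s v => cases h
  | .write a v => cases h

lemma cstep_res_inv {E : Env} {P : Proc} {c : Chan} {α : Label} {M'' : CPS}
    (h : CStep ⟨E, .res P c⟩ α M'') :
    ∃ P', M''.proc = .res P' c ∧ CStep ⟨E, P⟩ α ⟨M''.env, P'⟩ ∧
      (∀ v, α ≠ .inp c v ∧ α ≠ .out c v) := by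
  match α with
  | .tick =>
      obtain ⟨ht, hnt, hinv, hnext⟩ := h
      obtain ⟨P', hp, ht'⟩ := tstep_res_inv ht
      exact ⟨P', hp, ⟨ht', notau_res_iff.mp hnt, hinv, hnext⟩, by intro v; simp⟩
  | .tau => exact cstepu_res_inv h
  | .out c' v => exact cstepu_res_inv h
  | .inp c' v => exact cstepu_res_inv h
  | .read s v => exact cstepu_res_inv h
  | .write a v => exact cstepu_res_inv h

lemma weaktau_res {M N : CPS} (c : Chan) (h : WeakTau M N) :
    WeakTau ⟨M.env, .res M.proc c⟩ ⟨N.env, .res N.proc c⟩ := by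
  induction h with
  | refl => exact Relation.ReflTransGen.refl
  | tail _ hstep ih => exact ih.tail (cstepu_tau_res c hstep)

lemma weakhat_res {M N : CPS} {c : Chan} {α : Label}
    (h : WeakHat M α N) (hc : ∀ v, α ≠ .inp c v ∧ α ≠ .out c v) :
    WeakHat ⟨M.env, .res M.proc c⟩ α ⟨N.env, .res N.proc c⟩ := by
  match α with
  | .tau => exact weaktau_res c h
  | .tick | .out _ _ | .inp _ _ | .read _ _ | .write _ _ =>
      obtain ⟨M1, M2, h1, h2, h3⟩ := h
      exact ⟨⟨M1.env, .res M1.proc c⟩, ⟨M2.env, .res M2.proc c⟩,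
        weaktau_res c h1, cstep_res h2 hc, weaktau_res c h3⟩

end ResLemmas

/-- **Congruence of bisimilarity w.r.t. channel restriction** (Theorem 2(3)):
`M ≈ N` implies `M∖c ≈ N∖c`. -/
theorem bisim_res (M N : CPS) (c : Chan)
    (hwfM : M.WellFormed) (hwfN : N.WellFormed)
    (h : Bisim M N) :
    Bisim ⟨M.env, .res M.proc c⟩ ⟨N.env, .res N.proc c⟩ := by
  obtain ⟨R, ⟨hsym, hbis⟩, hMN⟩ := h
  refine ⟨fun M' N' => ∃ E P F Q, M' = ⟨E, .res P c⟩ ∧ N' = ⟨F, .res Q c⟩ ∧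
    R ⟨E, P⟩ ⟨F, Q⟩, ⟨?_, ?_⟩, ?_⟩
  · rintro M' N' ⟨E, P, F, Q, rfl, rfl, hr⟩
    exact ⟨F, Q, E, P, rfl, rfl, hsym hr⟩
  · rintro M' N' α M'' ⟨E, P, F, Q, rfl, rfl, hr⟩ hstep
    obtain ⟨P', hp, h', hc⟩ := cstep_res_inv hstep
    obtain ⟨N'', hN, hr'⟩ := hbis hr h'
    refine ⟨⟨N''.env, .res N''.proc c⟩, weakhat_res (M := ⟨F, Q⟩) hN hc, ?_⟩
    refine ⟨M''.env, P', N''.env, N''.proc, ?_, rfl, hr'⟩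
    cases M'' with
    | mk env proc => simp_all
  · exact ⟨M.env, M.proc, N.env, N.proc, rfl, rfl, hMN⟩

end CCPS
end

section
/- Invariant properties of the engine (Lemma A.9): let Eng = Eng_1 --t1--> --tick--> Eng_2 --t2--> --tick--> … --t_{n-1}--> --tick--> Eng_n be any execution of the engine CPS in which each trace t_j contains no tick-action, and write Eng_i = E_i ⋈ P_i with state function ξx^i and actuator function ξu^i. Then for every i ∈ 1..n−1: (1) if ξu^i(cool) = off then ξx^i(temp) ∈ [0, 11+ε+δ]; (2) if ξu^i(cool) = off and ξx^i(temp) ∈ (10+ε, 11+ε+δ] then ξu^{i+1}(cool) = on; (3) if ξu^i(cool) = on then ξx^i(temp) ∈ (10−ε−k·(1+δ), 11+ε+δ−k·(1−δ)] for some k ∈ 1..5 such that ξu^{i−k}(cool) = off and ξu^{i−j}(cool) = on for all j ∈ 0..k−1. -/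
namespace CCPS

set_option linter.dupNamespace false
set_option maxHeartbeats 1000000

@[simp] lemma lift_ite (c : Prop) [Decidable c] (P Q : Proc) (n : ℕ) :
    Proc.lift n (if c then P else Q) = if c then Proc.lift n P else Proc.lift n Q := by
  split <;> rfl

@[simp] lemma subst_ite (c : Prop) [Decidable c] (P Q R : Proc) (n : ℕ) :
    Proc.subst (if c then P else Q) n R = if c then Proc.subst P n R else Proc.subst Q n R := by
  split <;> rfl

@[simp] lemma subst_lift (P : Proc) (c : ℕ) (R : Proc) :
    Proc.subst (Proc.lift c P) c R = P := by
  induction P generalizing c R with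
  | pvar m =>
      by_cases h : m < c
      · have h1 : ¬ m = c := by omega
        have h2 : ¬ c < m := by omega
        simp [Proc.lift, h, Proc.subst, h1, h2]
      · have h1 : ¬ m + 1 = c := by omega
        have h2 : c < m + 1 := by omega
        simp [Proc.lift, h, Proc.subst, h1, h2]
  | _ => simp_all [Proc.lift, Proc.subst]

noncomputable section
open Classical

def P0 : Proc := CtrlN 0 0 0

def Pon : Proc := .fix (Proc.ticks 5 (prefRead 0 (fun y =>
        if 10 < y then prefOut warningCh 0 (.pvar 0)
        else prefWrite 0 valOff (.tick P0))))

def Fbr : Val → Proc := fun v => if 10 < v then prefWrite 0 valOn Pon else .tick P0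

def Gbr : Val → Proc := fun y =>
  if 10 < y then prefOut warningCh 0 Pon else prefWrite 0 valOff (.tick P0)

def PreadCool : Proc := prefRead 0 Gbr

lemma unfold_P0body : Proc.unfold (prefRead 0 (fun x =>
    if 10 < x then
      prefWrite 0 valOn (.fix (Proc.ticks 5 (prefRead 0 (fun y =>
        if 10 < y then prefOut warningCh 0 (.pvar 0)
        else prefWrite 0 valOff (.tick (.pvar 1))))))
    else .tick (.pvar 0))) = prefRead 0 Fbr := by
  simp [Proc.unfold, prefRead, prefWrite, prefOut, Proc.ticks, Proc.subst, Proc.lift, P0, CtrlN, Pon, Fbr]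

lemma unfold_prefRead (s : ℕ) (f : Val → Proc) :
    Proc.unfold (.read s (fun v => Proc.lift 0 (f v)) (.pvar 0)) = .read s f (prefRead s f) := by
  simp [Proc.unfold, Proc.subst, prefRead]

lemma unfold_prefWrite (a : ℕ) (v : Val) (P : Proc) :
    Proc.unfold (.write a v (Proc.lift 0 P) (.pvar 0)) = .write a v P (prefWrite a v P) := by
  simp [Proc.unfold, Proc.subst, prefWrite]

lemma unfold_prefOut (c : Chan) (v : Val) (P : Proc) :
    Proc.unfold (.out c v (Proc.lift 0 P) (.pvar 0)) = .out c v P (prefOut c v P) := by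
  simp [Proc.unfold, Proc.subst, prefOut]

lemma unfold_Ponbody : Proc.unfold (Proc.ticks 5 (prefRead 0 (fun y =>
        if 10 < y then prefOut warningCh 0 (.pvar 0)
        else prefWrite 0 valOff (.tick P0)))) = Proc.ticks 5 PreadCool := by
  simp [Proc.unfold, prefRead, prefWrite, prefOut, Proc.ticks, Proc.subst, Proc.lift, P0, CtrlN,
    Pon, PreadCool, Gbr]

/-! ### UStep / TStep inversions -/

lemma ustep_fix_iff {P : Proc} {l Q} : UStep (.fix P) l Q ↔ UStep (Proc.unfold P) l Q := by
  constructor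
  · intro h; cases h; assumption
  · exact .unfold

lemma ustep_read_iff {s f Q0 l Q} : UStep (.read s f Q0) l Q ↔ ∃ v, l = .read s v ∧ Q = f v := by
  constructor
  · intro h; cases h; exact ⟨_, rfl, rfl⟩
  · rintro ⟨v, rfl, rfl⟩; exact .read

lemma ustep_write_iff {a v P Q0 l Q} : UStep (.write a v P Q0) l Q ↔ l = .write a v ∧ Q = P := by
  constructor
  · intro h; cases h; exact ⟨rfl, rfl⟩
  · rintro ⟨rfl, rfl⟩; exact .write

lemma ustep_out_iff {c v P Q0 l Q} : UStep (.out c v P Q0) l Q ↔ l = .out c v ∧ Q = P := by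
  constructor
  · intro h; cases h; exact ⟨rfl, rfl⟩
  · rintro ⟨rfl, rfl⟩; exact .outp

@[simp] lemma ustep_tick {P : Proc} {l Q} : ¬ UStep (.tick P) l Q := by intro h; cases h

lemma tstep_fix_iff {P : Proc} {Q} : TStep (.fix P) Q ↔ TStep (Proc.unfold P) Q := by
  constructor
  · intro h; cases h; assumption
  · exact .unfold

lemma tstep_tick_iff {P Q : Proc} : TStep (.tick P) Q ↔ Q = P := by
  constructor
  · intro h; cases h; rfl
  · rintro rfl; exact .delay

lemma ustep_P0 {l Q} : UStep P0 l Q ↔ ∃ v, l = .read 0 v ∧ Q = Fbr v := by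
  rw [show P0 = .fix (prefRead 0 (fun x =>
    if 10 < x then
      prefWrite 0 valOn (.fix (Proc.ticks 5 (prefRead 0 (fun y =>
        if 10 < y then prefOut warningCh 0 (.pvar 0)
        else prefWrite 0 valOff (.tick (.pvar 1))))))
    else .tick (.pvar 0))) from rfl]
  rw [ustep_fix_iff, unfold_P0body, show prefRead 0 Fbr = .fix (.read 0 (fun v => Proc.lift 0 (Fbr v)) (.pvar 0)) from rfl,
    ustep_fix_iff, unfold_prefRead, ustep_read_iff]

lemma ustep_prefWrite {a w P l Q} : UStep (prefWrite a w P) l Q ↔ l = .write a w ∧ Q = P := by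
  rw [show prefWrite a w P = .fix (.write a w (Proc.lift 0 P) (.pvar 0)) from rfl,
    ustep_fix_iff, unfold_prefWrite, ustep_write_iff]

lemma ustep_PreadCool {l Q} : UStep PreadCool l Q ↔ ∃ v, l = .read 0 v ∧ Q = Gbr v := by
  rw [show PreadCool = .fix (.read 0 (fun v => Proc.lift 0 (Gbr v)) (.pvar 0)) from rfl,
    ustep_fix_iff, unfold_prefRead, ustep_read_iff]

@[simp] lemma ustep_Pon {l Q} : ¬ UStep Pon l Q := by
  rw [show Pon = .fix (Proc.ticks 5 (prefRead 0 (fun y =>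
        if 10 < y then prefOut warningCh 0 (.pvar 0)
        else prefWrite 0 valOff (.tick P0)))) from rfl, ustep_fix_iff, unfold_Ponbody]
  exact ustep_tick

lemma tstep_Pon {Q} : TStep Pon Q ↔ Q = Proc.ticks 4 PreadCool := by
  rw [show Pon = .fix (Proc.ticks 5 (prefRead 0 (fun y =>
        if 10 < y then prefOut warningCh 0 (.pvar 0)
        else prefWrite 0 valOff (.tick P0)))) from rfl, tstep_fix_iff, unfold_Ponbody]
  exact tstep_tick_iff

/-! ### Environment lemmas -/

def Egen (T u : ℝ) : Env := { EngEnvN 1 0 0 0 with xi_x := fun _ => T, xi_u := fun _ => u }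

lemma mem_zero (b : {n // n ∈ ({0} : Finset ℕ)}) : (b : ℕ) = 0 := by
  have := b.2; rwa [Finset.mem_singleton] at this

lemma fun_const {α : Type} (g : {n // n ∈ ({0} : Finset ℕ)} → α) :
    g = fun _ => g ⟨0, by simp⟩ := by
  funext b
  have : b = ⟨0, by simp⟩ := Subtype.ext (mem_zero b)
  rw [this]

lemma eng0 : Eng = ⟨Egen 0 valOff, P0⟩ := rfl

lemma updateAct_Egen (T u w : ℝ) : updateAct (Egen T u) 0 w = Egen T w := by
  simp only [updateAct, Egen]
  congr 1
  funext b
  simp [mem_zero b]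

lemma invHolds_Egen (T u : ℝ) : invHolds (Egen T u) ↔ 0 ≤ T ∧ T ≤ 30 := by
  constructor
  · intro h; exact h ⟨0, by simp⟩
  · intro h y; exact h

lemma readSensor_Egen (T u : ℝ) :
    readSensor (Egen T u) 0 = Set.Icc (T - engEps) (T + engEps) := by
  ext r
  constructor
  · rintro ⟨h, ξ, hξ, rfl⟩
    exact hξ ⟨0, h⟩ ⟨0, by simp⟩
  · intro hr
    exact ⟨by simp [Egen, EngEnvN], fun _ => r, fun t y => hr, rfl⟩

lemma nextEnv_Egen (T u : ℝ) {E' : Env} :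
    E' ∈ nextEnv (Egen T u) ↔
      ∃ γ ∈ Set.Icc (-engDelta) engDelta, E' = Egen (T + engHeat 1 u + γ) u := by
  constructor
  · rintro ⟨ξ, ⟨γ, hγ, hξ⟩, rfl⟩
    refine ⟨γ, hγ, ?_⟩
    simp only [Egen]
    congr 1
    funext y
    exact hξ y ⟨0, by simp⟩
  · rintro ⟨γ, hγ, rfl⟩
    exact ⟨fun _ => T + engHeat 1 u + γ, ⟨γ, hγ, fun y u' => rfl⟩, rfl⟩

/-! ### Slot lemmas -/

lemma heat_on : engHeat 1 valOn = -1 := by simp [engHeat, valOn]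

lemma heat_off : engHeat 1 valOff = 1 := by norm_num [engHeat, valOff]

lemma eps_nonneg : (0:ℝ) ≤ engEps := by norm_num [engEps]

lemma no_untimed_of_no_ustep {E P M'} (h : ∀ l Q, ¬ UStep P l Q) :
    ¬ UntimedStep ⟨E, P⟩ M' := by
  rintro ⟨α, hne, hstep⟩
  match α, hstep with
  | .tick, _ => exact hne rfl
  | .tau, hstep | .out c v, hstep | .inp c v, hstep =>
      cases hstep <;> exact h _ _ (by assumption)

lemma untimedReach_of_no_ustep {E P M'} (h : ∀ l Q, ¬ UStep P l Q)
    (hr : UntimedReach ⟨E, P⟩ M') : M' = ⟨E, P⟩ := by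
  rcases hr.cases_head with rfl | ⟨b, hb, _⟩
  · rfl
  · exact absurd hb (no_untimed_of_no_ustep h)

lemma untimed_from_read {T u M'} {Pr : Proc} {f : Val → Proc} (hP : ∀ l Q, UStep Pr l Q ↔ ∃ v, l = .read 0 v ∧ Q = f v)
    (h : UntimedStep ⟨Egen T u, Pr⟩ M') :
    ∃ v ∈ Set.Icc (T - engEps) (T + engEps), M' = ⟨Egen T u, f v⟩ := by
  rcases h with ⟨α, hne, hstep⟩
  match α, hstep with
  | .tick, _ => exact absurd rfl hne
  | .tau, hstep =>
      cases hstep with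
      | sensRead hu _ hv =>
          rw [hP] at hu
          obtain ⟨v, hlv, rfl⟩ := hu
          injection hlv with h1 h2
          subst h1; subst h2
          rw [readSensor_Egen] at hv
          exact ⟨_, hv, rfl⟩
      | actWrite hu _ => rw [hP] at hu; simp at hu
      | tau hu _ => rw [hP] at hu; simp at hu
  | .out c v, hstep => cases hstep with
      | out hu _ => rw [hP] at hu; simp at hu
  | .inp c v, hstep => cases hstep with
      | inp hu _ => rw [hP] at hu; simp at hu

lemma untimed_from_write {T u w M' C} (h : UntimedStep ⟨Egen T u, prefWrite 0 w C⟩ M') :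
    M' = ⟨Egen T w, C⟩ := by
  rcases h with ⟨α, hne, hstep⟩
  match α, hstep with
  | .tick, _ => exact absurd rfl hne
  | .tau, hstep =>
      cases hstep with
      | sensRead hu _ hv => rw [ustep_prefWrite] at hu; simp at hu
      | actWrite hu _ =>
          rw [ustep_prefWrite] at hu
          obtain ⟨hl, rfl⟩ := hu
          cases hl
          rw [updateAct_Egen]
      | tau hu _ => rw [ustep_prefWrite] at hu; simp at hu
  | .out c v, hstep => cases hstep with
      | out hu _ => rw [ustep_prefWrite] at hu; simp at hu
  | .inp c v, hstep => cases hstep with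
      | inp hu _ => rw [ustep_prefWrite] at hu; simp at hu

lemma tick_blocked_read {T u N} {Pr : Proc} {f : Val → Proc} (hP : ∀ l Q, UStep Pr l Q ↔ ∃ v, l = .read 0 v ∧ Q = f v)
    (h : CStep ⟨Egen T u, Pr⟩ .tick N) : False := by
  obtain ⟨_, hnotau, hinv, _⟩ := h
  exact hnotau ⟨Egen T u, f T⟩
    (CStepU.sensRead ((hP _ _).2 ⟨T, rfl, rfl⟩) hinv
      (by rw [readSensor_Egen]; constructor <;> nlinarith [eps_nonneg]))

lemma tick_blocked_write {T u w N C} (h : CStep ⟨Egen T u, prefWrite 0 w C⟩ .tick N) : False := by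
  obtain ⟨_, hnotau, hinv, _⟩ := h
  exact hnotau ⟨updateAct (Egen T u) 0 w, C⟩
    (CStepU.actWrite (ustep_prefWrite.2 ⟨rfl, rfl⟩) hinv)

/-- One slot from the idle control state. -/
lemma slotA {T u : ℝ} {N : CPS} (h : SlotStep ⟨Egen T u, P0⟩ N) :
    ∃ γ ∈ Set.Icc (-engDelta) engDelta, ∃ v ∈ Set.Icc (T - engEps) (T + engEps),
      ((¬ 10 < v) ∧ N = ⟨Egen (T + engHeat 1 u + γ) u, P0⟩) ∨
      (10 < v ∧ N = ⟨Egen (T - 1 + γ) valOn, Proc.ticks 4 PreadCool⟩) := by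
  obtain ⟨M', hreach, htick⟩ := h
  have key : ∀ M', UntimedReach ⟨Egen T u, P0⟩ M' →
      M' = ⟨Egen T u, P0⟩ ∨
      (∃ v ∈ Set.Icc (T-engEps) (T+engEps), (¬ 10 < v) ∧ M' = ⟨Egen T u, .tick P0⟩) ∨
      (∃ v ∈ Set.Icc (T-engEps) (T+engEps), 10 < v ∧ M' = ⟨Egen T u, prefWrite 0 valOn Pon⟩) ∨
      (∃ v ∈ Set.Icc (T-engEps) (T+engEps), 10 < v ∧ M' = ⟨Egen T valOn, Pon⟩) := by
    intro M' hr
    induction hr with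
    | refl => exact Or.inl rfl
    | tail h1 h2 ih =>
        rcases ih with rfl | ⟨v, hv, hv10, rfl⟩ | ⟨v, hv, hv10, rfl⟩ | ⟨v, hv, hv10, rfl⟩
        · obtain ⟨v, hv, rfl⟩ := untimed_from_read (fun _ _ => ustep_P0) h2
          by_cases h10 : 10 < v
          · exact Or.inr (Or.inr (Or.inl ⟨v, hv, h10, by simp [Fbr, h10]⟩))
          · exact Or.inr (Or.inl ⟨v, hv, h10, by simp [Fbr, h10]⟩)
        · exact absurd h2 (no_untimed_of_no_ustep (fun _ _ => ustep_tick))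
        · exact Or.inr (Or.inr (Or.inr ⟨v, hv, hv10, untimed_from_write h2⟩))
        · exact absurd h2 (no_untimed_of_no_ustep (fun _ _ => ustep_Pon))
  rcases key M' hreach with rfl | ⟨v, hv, hv10, rfl⟩ | ⟨v, hv, hv10, rfl⟩ | ⟨v, hv, hv10, rfl⟩
  · exact absurd htick (tick_blocked_read (fun _ _ => ustep_P0))
  · obtain ⟨hT, _, _, hnext⟩ := htick
    rw [tstep_tick_iff] at hT
    rw [nextEnv_Egen] at hnext
    obtain ⟨γ, hγ, hE⟩ := hnext
    refine ⟨γ, hγ, v, hv, Or.inl ⟨hv10, ?_⟩⟩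
    cases N with | mk e p =>
      dsimp only at hT hE
      rw [hT, hE]
  · exact absurd htick tick_blocked_write
  · obtain ⟨hT, _, _, hnext⟩ := htick
    rw [tstep_Pon] at hT
    rw [nextEnv_Egen, ] at hnext
    obtain ⟨γ, hγ, hE⟩ := hnext
    rw [heat_on] at hE
    refine ⟨γ, hγ, v, hv, Or.inr ⟨hv10, ?_⟩⟩
    have h1 : T + -1 + γ = T - 1 + γ := by ring
    rw [h1] at hE
    cases N with | mk e p =>
      dsimp only at hT hE
      rw [hT, hE]

/-- One slot in the middle of the cooling phase. -/
lemma slotB {T u : ℝ} {k : ℕ} {N : CPS}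
    (h : SlotStep ⟨Egen T u, Proc.ticks (k+1) PreadCool⟩ N) :
    ∃ γ ∈ Set.Icc (-engDelta) engDelta,
      N = ⟨Egen (T + engHeat 1 u + γ) u, Proc.ticks k PreadCool⟩ := by
  obtain ⟨M', hreach, htick⟩ := h
  have : M' = ⟨Egen T u, Proc.ticks (k+1) PreadCool⟩ :=
    untimedReach_of_no_ustep (fun _ _ => ustep_tick) hreach
  subst this
  obtain ⟨hT, _, _, hnext⟩ := htick
  rw [show Proc.ticks (k+1) PreadCool = .tick (Proc.ticks k PreadCool) from rfl,
    tstep_tick_iff] at hT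
  rw [nextEnv_Egen] at hnext
  obtain ⟨γ, hγ, hE⟩ := hnext
  refine ⟨γ, hγ, ?_⟩
  cases N with | mk e p =>
    dsimp only at hT hE
    rw [hT, hE]

/-- The final slot of the cooling phase (temperature low enough that the
warning branch is not taken). -/
lemma slotB0 {T u : ℝ} {N : CPS} (hT10 : T + engEps < 10)
    (h : SlotStep ⟨Egen T u, PreadCool⟩ N) :
    ∃ γ ∈ Set.Icc (-engDelta) engDelta, N = ⟨Egen (T + 1 + γ) valOff, P0⟩ := by
  obtain ⟨M', hreach, htick⟩ := h
  have key : ∀ M', UntimedReach ⟨Egen T u, PreadCool⟩ M' →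
      M' = ⟨Egen T u, PreadCool⟩ ∨
      M' = ⟨Egen T u, prefWrite 0 valOff (.tick P0)⟩ ∨
      M' = ⟨Egen T valOff, .tick P0⟩ := by
    intro M' hr
    induction hr with
    | refl => exact Or.inl rfl
    | tail h1 h2 ih =>
        rcases ih with rfl | rfl | rfl
        · obtain ⟨v, hv, rfl⟩ := untimed_from_read (fun _ _ => ustep_PreadCool) h2
          have h10 : ¬ 10 < v := by rcases hv with ⟨_, hv2⟩; intro hc; linarith
          exact Or.inr (Or.inl (by simp [Gbr, h10]))
        · exact Or.inr (Or.inr (untimed_from_write h2))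
        · exact absurd h2 (no_untimed_of_no_ustep (fun _ _ => ustep_tick))
  rcases key M' hreach with rfl | rfl | rfl
  · exact absurd htick (tick_blocked_read (fun _ _ => ustep_PreadCool))
  · exact absurd htick tick_blocked_write
  · obtain ⟨hT, _, _, hnext⟩ := htick
    rw [tstep_tick_iff] at hT
    rw [nextEnv_Egen] at hnext
    obtain ⟨γ, hγ, hE⟩ := hnext
    rw [heat_off] at hE
    refine ⟨γ, hγ, ?_⟩
    cases N with | mk e p =>
      dsimp only at hT hE
      rw [hT, hE]

/-! ### The slot invariant -/

@[simp] lemma cool_Egen {T u : ℝ} {P : Proc} : CPS.cool ⟨Egen T u, P⟩ = u := by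
  rw [CPS.cool, dif_pos (by simp [Egen, EngEnvN])]; rfl

@[simp] lemma temp_Egen {T u : ℝ} {P : Proc} : CPS.temp ⟨Egen T u, P⟩ = T := by
  rw [CPS.temp, dif_pos (by simp [Egen, EngEnvN])]; rfl

lemma isOn_valOn : IsOn valOn := by norm_num [IsOn, valOn]
lemma isOff_valOff : IsOff valOff := by norm_num [IsOff, valOff]
lemma not_isOff_valOn : ¬ IsOff valOn := by norm_num [IsOff, valOn]

def Phi (f : ℕ → CPS) (i : ℕ) : Prop :=
  (∃ T : ℝ, f i = ⟨Egen T valOff, P0⟩ ∧ 0 ≤ T ∧ T ≤ 11 + engEps + engDelta) ∨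
  (∃ T : ℝ, ∃ k : ℕ, k ≤ 4 ∧ f i = ⟨Egen T valOn, Proc.ticks k PreadCool⟩ ∧
    10 - engEps - ((5-k : ℕ) : ℝ) * (1 + engDelta) < T ∧
    T ≤ 11 + engEps + engDelta - ((5-k : ℕ) : ℝ) * (1 - engDelta) ∧
    (5-k : ℕ) ≤ i ∧ IsOff ((f (i - (5-k))).cool) ∧ ∀ j < 5-k, IsOn ((f (i - j)).cool))

lemma phi_step (f : ℕ → CPS) (i : ℕ) (h : Phi f i)
    (hs : SlotStep (f i) (f (i+1))) : Phi f (i+1) := by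
  rcases h with ⟨T, hfi, hT0, hT1⟩ | ⟨T, k, hk4, hfi, hTl, hTu, hki, hoff, hon⟩
  · rw [hfi] at hs
    obtain ⟨γ, hγ, v, hv, hbr⟩ := slotA hs
    rw [heat_off] at hbr
    rcases hγ with ⟨hγ1, hγ2⟩
    rcases hv with ⟨hv1, hv2⟩
    rcases hbr with ⟨h10, hN⟩ | ⟨h10, hN⟩
    · left
      refine ⟨T + 1 + γ, hN, ?_, ?_⟩
      · have : (0:ℝ) < 1 - engDelta := by norm_num [engDelta]
        nlinarith [hT0]
      · push_neg at h10
        have : T ≤ 10 + engEps := by linarith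
        norm_num [engEps, engDelta] at *
        linarith
    · right
      refine ⟨T - 1 + γ, 4, le_refl 4, hN, ?_, ?_, by omega, ?_, ?_⟩
      · have hT : 10 - engEps < T := by linarith
        norm_num [engEps, engDelta] at *
        linarith
      · norm_num [engEps, engDelta] at *
        linarith
      · have : i + 1 - (5-4) = i := by omega
        rw [this, hfi, cool_Egen]
        exact isOff_valOff
      · intro j hj
        interval_cases j
        rw [Nat.sub_zero, hN, cool_Egen]
        exact isOn_valOn
  · rw [hfi] at hs
    match k, hk4 with
    | (k'+1 : ℕ), hk4 =>
      obtain ⟨γ, hγ, hN⟩ := slotB hs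
      rw [heat_on] at hN
      rcases hγ with ⟨hγ1, hγ2⟩
      right
      have hc : ((5 - k' : ℕ) : ℝ) = ((5 - (k'+1) : ℕ) : ℝ) + 1 := by
        have h1 : (5 - k' : ℕ) = (5 - (k'+1) : ℕ) + 1 := by omega
        rw [h1]; push_cast; ring
      refine ⟨T + -1 + γ, k', by omega, hN, ?_, ?_, by omega, ?_, ?_⟩
      · rw [hc]; norm_num [engDelta] at *; linarith
      · rw [hc]; norm_num [engDelta] at *; linarith
      · have : i + 1 - (5-k') = i - (5-(k'+1)) := by omega
        rw [this]; exact hoff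
      · intro j hj
        match j with
        | 0 => rw [Nat.sub_zero, hN, cool_Egen]; exact isOn_valOn
        | (j'+1 : ℕ) =>
          have : i + 1 - (j'+1) = i - j' := by omega
          rw [this]
          exact hon j' (by omega)
    | 0, _ =>
      have h85 : T + engEps < 10 := by
        norm_num [engEps, engDelta] at *
        linarith
      obtain ⟨γ, hγ, hN⟩ := slotB0 h85 hs
      rcases hγ with ⟨hγ1, hγ2⟩
      left
      refine ⟨T + 1 + γ, hN, ?_, ?_⟩
      · norm_num [engEps, engDelta] at *
        linarith
      · norm_num [engEps, engDelta] at *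
        linarith


theorem engine_invariant_properties' (n : ℕ) (f : ℕ → CPS)
    (h0 : f 0 = Eng)
    (hrun : ∀ i, i + 1 < n → SlotStep (f i) (f (i+1))) :
    ∀ i, i + 1 < n →
      (IsOff (f i).cool →
        (f i).temp ∈ Set.Icc 0 (11 + engEps + engDelta)) ∧
      (IsOff (f i).cool →
        (f i).temp ∈ Set.Ioc (10 + engEps) (11 + engEps + engDelta) →
        IsOn (f (i+1)).cool) ∧
      (IsOn (f i).cool → ∃ k : ℕ, 1 ≤ k ∧ k ≤ 5 ∧ k ≤ i ∧
        (f i).temp ∈ Set.Ioc (10 - engEps - (k : ℝ) * (1 + engDelta))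
                             (11 + engEps + engDelta - (k : ℝ) * (1 - engDelta)) ∧
        IsOff (f (i - k)).cool ∧
        ∀ j < k, IsOn (f (i - j)).cool) := by
  have hPhi : ∀ i, i < n → Phi f i := by
    intro i
    induction i with
    | zero => intro _; exact Or.inl ⟨0, by rw [h0]; rfl, le_refl 0, by norm_num [engEps, engDelta]⟩
    | succ i ih => intro hi; exact phi_step f i (ih (by omega)) (hrun i hi)
  intro i hi
  have hP1 := hPhi i (by omega)
  refine ⟨?_, ?_, ?_⟩
  · intro hoffc
    rcases hP1 with ⟨T, hfi, h0T, hT⟩ | ⟨T, k, hk4, hfi, _⟩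
    · rw [hfi, temp_Egen]; exact ⟨h0T, hT⟩
    · rw [hfi, cool_Egen] at hoffc; exact absurd hoffc not_isOff_valOn
  · intro hoffc htemp
    rcases hP1 with ⟨T, hfi, h0T, hT⟩ | ⟨T, k, hk4, hfi, _⟩
    · have hs := hrun i hi
      rw [hfi] at hs
      obtain ⟨γ, hγ, v, hv, hbr⟩ := slotA hs
      rw [hfi, temp_Egen] at htemp
      rcases hbr with ⟨h10, hN⟩ | ⟨h10, hN⟩
      · exfalso
        rcases htemp with ⟨ht1, _⟩
        rcases hv with ⟨hv1, _⟩
        apply h10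
        norm_num [engEps] at *
        linarith
      · rw [hN, cool_Egen]
        exact isOn_valOn
    · rw [hfi, cool_Egen] at hoffc; exact absurd hoffc not_isOff_valOn
  · intro honc
    rcases hP1 with ⟨T, hfi, h0T, hT⟩ | ⟨T, k, hk4, hfi, hTl, hTu, hki, hoff, hon⟩
    · rw [hfi, cool_Egen] at honc; exact absurd honc (by norm_num [IsOn, valOff])
    · exact ⟨5-k, by omega, by omega, hki,
        by rw [hfi, temp_Egen]; exact ⟨hTl, hTu⟩, hoff, hon⟩
end

/-- **Invariant properties of the engine** (Lemma A.9): along any execution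
`Eng = f 0 --t₀--tick--> f 1 --t₁--tick--> ... --tick--> f (n-1)` (each `tᵢ`
tick-free), for every slot `i` (with `i+1 < n`):
(1) if the cooling is off then `temp ∈ [0, 11+ε+δ]`;
(2) if moreover `temp ∈ (10+ε, 11+ε+δ]` then the cooling is on in slot `i+1`;
(3) if the cooling is on then `temp ∈ (10−ε−k(1+δ), 11+ε+δ−k(1−δ)]` for some
`k ∈ 1..5` such that the cooling was off `k` slots ago and on in the last `k`
slots. -/
theorem engine_invariant_properties (n : ℕ) (f : ℕ → CPS)
    (h0 : f 0 = Eng)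
    (hrun : ∀ i, i + 1 < n → SlotStep (f i) (f (i+1))) :
    ∀ i, i + 1 < n →
      (IsOff (f i).cool →
        (f i).temp ∈ Set.Icc 0 (11 + engEps + engDelta)) ∧
      (IsOff (f i).cool →
        (f i).temp ∈ Set.Ioc (10 + engEps) (11 + engEps + engDelta) →
        IsOn (f (i+1)).cool) ∧
      (IsOn (f i).cool → ∃ k : ℕ, 1 ≤ k ∧ k ≤ 5 ∧ k ≤ i ∧
        (f i).temp ∈ Set.Ioc (10 - engEps - (k : ℝ) * (1 + engDelta))
                             (11 + engEps + engDelta - (k : ℝ) * (1 - engDelta)) ∧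
        IsOff (f (i - k)).cool ∧
        ∀ j < k, IsOn (f (i - j)).cool) := by
  exact engine_invariant_properties' n f h0 hrun

end CCPS
end
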